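/- Let Q be a commutative nontrivial ZDF involutive quantale and X a set. There exists a global section of the Gelfand spectrum over X if and only if there exists a global section of the prime spectrum over X. -/

import Mathlib

open Classical

noncomputable section

universe u v

/-- A commutative involutive quantale: a complete lattice with a commutative
monoid operation distributing over arbitrary joins, together with a
join-preserving involution compatible with multiplication and unit. -/
structure CommInvQuantale (Q : Type u) [CompleteLattice Q] : Type u where
  mul : Q → Q → Q
  one : Q
  mul_comm : ∀ a b : Q, mul a b = mul b a
  mul_assoc : ∀ a b c : Q, mul (mul a b) c = mul a (mul b c)
  one_mul : ∀ a : Q, mul one a = a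
  mul_sSup : ∀ (a : Q) (S : Set Q), mul a (sSup S) = ⨆ y ∈ S, mul a y
  inv : Q → Q
  inv_inv : ∀ a : Q, inv (inv a) = a
  inv_sSup : ∀ S : Set Q, inv (sSup S) = ⨆ y ∈ S, inv y
  inv_mul : ∀ a b : Q, inv (mul a b) = mul (inv a) (inv b)
  inv_one : inv one = one

namespace CommInvQuantale

variable {Q : Type u} [CompleteLattice Q] {X : Type v}

/-- Zero-divisor free: `x·y = 0` implies `x = 0` or `y = 0` (where `0 = ⊥`). -/
def ZDF (Qd : CommInvQuantale Q) : Prop :=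
  ∀ a b : Q, Qd.mul a b = ⊥ → a = ⊥ ∨ b = ⊥

/-- Nontrivial: `1 ≠ 0`. -/
def NontrivialQ (Qd : CommInvQuantale Q) : Prop := Qd.one ≠ (⊥ : Q)

/-- The zero `Q`-relation. -/
def qzero : X → X → Q := fun _ _ => (⊥ : Q)

/-- The support of a `Q`-relation. -/
def supp (f : X → X → Q) : Set X := {x | ∃ y, f x y ≠ (⊥ : Q)}

/-- The cosupport of a `Q`-relation. -/
def cosupp (f : X → X → Q) : Set X := {x | ∃ y, f y x ≠ (⊥ : Q)}

/-- The kernel of a character of `A`. -/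
def kerChar (A : Set (X → X → Q)) (ρ : (X → X → Q) → Q) : Set (X → X → Q) :=
  {f ∈ A | ρ f = (⊥ : Q)}

/-- The map `w : Q → 2` sending `0` to `0` and every nonzero element to `1`
(with `2` modelled by `Bool`). -/
def wmap : Q → Bool := fun q => if q = (⊥ : Q) then false else true

/-- The kernel of a homomorphism `γ : A → 2` (with `2` modelled by `Bool`). -/
def kerTwo (A : Set (X → X → Q)) (γ : (X → X → Q) → Bool) : Set (X → X → Q) :=
  {f ∈ A | γ f = false}

variable (Qd : CommInvQuantale Q)

/-- Composition of `Q`-relations: `(f ∘ g)(x,z) = ⋁_y g(x,y) · f(y,z)`,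
so `qcomp Qd f g` is "`f` after `g`". -/
def qcomp (f g : X → X → Q) : X → X → Q := fun x z => ⨆ y : X, Qd.mul (g x y) (f y z)

/-- The identity `Q`-relation. -/
def qid : X → X → Q := fun x y => if x = y then Qd.one else ⊥

/-- The dagger of a `Q`-relation: `f†(x,y) = f(y,x)*`. -/
def qdag (f : X → X → Q) : X → X → Q := fun x y => Qd.inv (f y x)

/-- Scalar multiplication of a `Q`-relation: `(q•f)(x,y) = q·f(x,y)`. -/
def qsmul (q : Q) (f : X → X → Q) : X → X → Q := fun x y => Qd.mul q (f x y)

/-- A commutative unital *-subsemialgebra of `Hom(X,X)`: contains the zero and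
identity relations, closed under pointwise binary join, composition, scalar
multiplication and dagger, and composition is commutative on it. -/
structure IsSubalg (A : Set (X → X → Q)) : Prop where
  zero_mem : qzero ∈ A
  id_mem : Qd.qid ∈ A
  sup_mem : ∀ f ∈ A, ∀ g ∈ A, f ⊔ g ∈ A
  comp_mem : ∀ f ∈ A, ∀ g ∈ A, Qd.qcomp f g ∈ A
  smul_mem : ∀ (q : Q), ∀ f ∈ A, Qd.qsmul q f ∈ A
  dag_mem : ∀ f ∈ A, Qd.qdag f ∈ A
  comp_comm : ∀ f ∈ A, ∀ g ∈ A, Qd.qcomp f g = Qd.qcomp g f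

/-- The commutant of a set of `Q`-relations. -/
def commutant (B : Set (X → X → Q)) : Set (X → X → Q) :=
  { f | ∀ g ∈ B, Qd.qcomp f g = Qd.qcomp g f }

/-- A commutative von Neumann unital *-subsemialgebra: a commutative unital
*-subsemialgebra equal to its double commutant. -/
def IsVN (A : Set (X → X → Q)) : Prop :=
  Qd.IsSubalg A ∧ Qd.commutant (Qd.commutant A) = A

/-- A character of `A`: a map `ρ : Hom(X,X) → Q` with `ρ(0) = 0`, `ρ(id) = 1`,
preserving binary joins, composition and dagger on `A`. -/
structure IsChar (A : Set (X → X → Q)) (ρ : (X → X → Q) → Q) : Prop where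
  map_zero : ρ qzero = (⊥ : Q)
  map_id : ρ Qd.qid = Qd.one
  map_sup : ∀ f ∈ A, ∀ g ∈ A, ρ (f ⊔ g) = ρ f ⊔ ρ g
  map_comp : ∀ f ∈ A, ∀ g ∈ A, ρ (Qd.qcomp f g) = Qd.mul (ρ f) (ρ g)
  map_dag : ∀ f ∈ A, ρ (Qd.qdag f) = Qd.inv (ρ f)

/-- An ideal of `A`. -/
structure IsIdeal (A J : Set (X → X → Q)) : Prop where
  subset : J ⊆ A
  zero_mem : qzero ∈ J
  sup_mem : ∀ a ∈ J, ∀ b ∈ J, a ⊔ b ∈ J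
  absorb : ∀ f ∈ A, ∀ a ∈ J, Qd.qcomp f a ∈ J

/-- A prime k*-ideal of `A`: a proper prime ideal which is a k-ideal closed
under dagger. -/
structure IsPrimeKStarIdeal (A J : Set (X → X → Q)) : Prop where
  ideal : Qd.IsIdeal A J
  proper : J ≠ A
  prime : ∀ f ∈ A, ∀ g ∈ A, Qd.qcomp f g ∈ J → f ∈ J ∨ g ∈ J
  kideal : ∀ a ∈ J, ∀ b ∈ A, a ⊔ b ∈ J → b ∈ J
  dag_mem : ∀ a ∈ J, Qd.qdag a ∈ J

/-- A global section of the Gelfand spectrum over `X`: an assignment of a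
character to every commutative von Neumann unital *-subsemialgebra of
`Hom(X,X)`, compatible with restriction along inclusions. -/
def IsGelfandGlobalSection (ρ : Set (X → X → Q) → (X → X → Q) → Q) : Prop :=
  (∀ A : Set (X → X → Q), Qd.IsVN A → Qd.IsChar A (ρ A)) ∧
  (∀ A B : Set (X → X → Q), Qd.IsVN A → Qd.IsVN B → A ⊆ B → ∀ f ∈ A, ρ A f = ρ B f)

/-- A global section of the prime spectrum over `X`: an assignment of a prime
k*-ideal to every commutative von Neumann unital *-subsemialgebra of
`Hom(X,X)`, compatible with restriction along inclusions. -/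
def IsPrimeGlobalSection (χ : Set (X → X → Q) → Set (X → X → Q)) : Prop :=
  (∀ A : Set (X → X → Q), Qd.IsVN A → Qd.IsPrimeKStarIdeal A (χ A)) ∧
  (∀ A B : Set (X → X → Q), Qd.IsVN A → Qd.IsVN B → A ⊆ B → χ A = A ∩ χ B)

/-- An idempotent element of `A`. -/
def IsIdem (A : Set (X → X → Q)) (p : X → X → Q) : Prop :=
  p ∈ A ∧ Qd.qcomp p p = p

/-- A subunital idempotent of `A`: an idempotent with an orthogonal idempotent
complement summing to the identity. -/
def IsSubunital (A : Set (X → X → Q)) (p : X → X → Q) : Prop :=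
  Qd.IsIdem A p ∧ ∃ q, Qd.IsIdem A q ∧ Qd.qcomp p q = qzero ∧ p ⊔ q = Qd.qid

/-- A primitive subunital idempotent of `A`. -/
def IsPrimitive (A : Set (X → X → Q)) (p : X → X → Q) : Prop :=
  Qd.IsSubunital A p ∧ p ≠ qzero ∧
    ¬ ∃ s t, Qd.IsSubunital A s ∧ s ≠ qzero ∧ Qd.IsSubunital A t ∧ t ≠ qzero ∧
      Qd.qcomp s t = qzero ∧ s ⊔ t = p

/-- The unique quantale map `! : 2 → Q` (with `2` modelled by `Bool`). -/
def bang : Bool → Q := fun b => if b then Qd.one else ⊥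

/-- A homomorphism `γ : A → 2` (with `2` the two-element quantale, modelled by
`Bool` with join `||` and multiplication `&&`, trivial involution). -/
structure IsTwoHom (A : Set (X → X → Q)) (γ : (X → X → Q) → Bool) : Prop where
  map_zero : γ qzero = false
  map_id : γ Qd.qid = true
  map_sup : ∀ f ∈ A, ∀ g ∈ A, γ (f ⊔ g) = (γ f || γ g)
  map_comp : ∀ f ∈ A, ∀ g ∈ A, γ (Qd.qcomp f g) = (γ f && γ g)
  map_dag : ∀ f ∈ A, γ (Qd.qdag f) = γ f

/-- The Gelfand spectrum of `A`: the set of characters of `A`. -/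
def SpecG (A : Set (X → X → Q)) : Type (max u v) :=
  {ρ : (X → X → Q) → Q // Qd.IsChar A ρ}

/-- The prime spectrum of `A`: the set of prime k*-ideals of `A`. -/
def SpecP (A : Set (X → X → Q)) : Type (max u v) :=
  {J : Set (X → X → Q) // Qd.IsPrimeKStarIdeal A J}

/-- The Zariski topology on the Gelfand spectrum, with basic closed sets
`V_G(J) = {ρ | J ⊆ ker ρ}` for ideals `J` of `A`. -/
def zariskiG (A : Set (X → X → Q)) : TopologicalSpace (Qd.SpecG A) :=
  TopologicalSpace.generateFrom
    {U | ∃ J : Set (X → X → Q), Qd.IsIdeal A J ∧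
      U = {ρ : Qd.SpecG A | J ⊆ kerChar A ρ.1}ᶜ}

/-- The Zariski topology on the prime spectrum, with basic closed sets
`V_P(J) = {K | J ⊆ K}` for ideals `J` of `A`. -/
def zariskiP (A : Set (X → X → Q)) : TopologicalSpace (Qd.SpecP A) :=
  TopologicalSpace.generateFrom
    {U | ∃ J : Set (X → X → Q), Qd.IsIdeal A J ∧
      U = {K : Qd.SpecP A | J ⊆ K.1}ᶜ}

/-! Both directions are pointwise. The kernel of a character is a prime k*-ideal: primeness is
zero-divisor freeness of `Q`, properness is `1 ≠ 0`. Conversely, a prime k*-ideal `J` of a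
commutative `A` is the kernel of the `{0, 1}`-valued character sending `J` to `0` and `A \ J`
to `1`. Both constructions commute with restriction along `A ⊆ B`, so they carry global
sections to global sections. -/

theorem mul_bot (a : Q) : Qd.mul a ⊥ = ⊥ := by
  simpa using Qd.mul_sSup a ∅

theorem bot_mul (a : Q) : Qd.mul ⊥ a = ⊥ := by
  rw [Qd.mul_comm, Qd.mul_bot]

theorem inv_bot : Qd.inv ⊥ = ⊥ := by
  simpa using Qd.inv_sSup ∅

theorem qcomp_qid (f : X → X → Q) : Qd.qcomp f Qd.qid = f := by
  funext x z
  apply le_antisymm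
  · refine iSup_le fun y => ?_
    by_cases h : x = y
    · subst h
      simp [qid, Qd.one_mul]
    · simp [qid, h, Qd.bot_mul]
  · simpa [qcomp, qid, Qd.one_mul] using le_iSup (fun y => Qd.mul (Qd.qid x y) (f y z)) x

theorem qdag_qdag (f : X → X → Q) : Qd.qdag (Qd.qdag f) = f := by
  funext x y
  simp [qdag, Qd.inv_inv]

section Kernel

variable {Qd} {A : Set (X → X → Q)} {ρ : (X → X → Q) → Q}

theorem IsChar.isPrimeKStarIdeal_kerChar (hZDF : Qd.ZDF) (hNT : Qd.NontrivialQ)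
    (hA : Qd.IsSubalg A) (hρ : Qd.IsChar A ρ) : Qd.IsPrimeKStarIdeal A (kerChar A ρ) where
  ideal :=
    { subset := fun _ hf => hf.1
      zero_mem := ⟨hA.zero_mem, hρ.map_zero⟩
      sup_mem := by
        rintro a ⟨ha, ha0⟩ b ⟨hb, hb0⟩
        exact ⟨hA.sup_mem a ha b hb, by rw [hρ.map_sup a ha b hb, ha0, hb0, sup_idem]⟩
      absorb := by
        rintro f hf a ⟨ha, ha0⟩
        exact ⟨hA.comp_mem f hf a ha, by rw [hρ.map_comp f hf a ha, ha0, Qd.mul_bot]⟩ }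
  proper h := by
    have hid : Qd.qid ∈ kerChar A ρ := by rw [h]; exact hA.id_mem
    exact hNT (hρ.map_id ▸ hid.2)
  prime := by
    rintro f hf g hg ⟨-, hfg⟩
    rw [hρ.map_comp f hf g hg] at hfg
    exact (hZDF _ _ hfg).imp (fun h => ⟨hf, h⟩) (fun h => ⟨hg, h⟩)
  kideal := by
    rintro a ⟨ha, ha0⟩ b hb ⟨-, hab0⟩
    rw [hρ.map_sup a ha b hb, ha0, bot_sup_eq] at hab0
    exact ⟨hb, hab0⟩
  dag_mem := by
    rintro a ⟨ha, ha0⟩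
    exact ⟨hA.dag_mem a ha, by rw [hρ.map_dag a ha, ha0, Qd.inv_bot]⟩

theorem kerChar_eq_inter_kerChar {B : Set (X → X → Q)} {σ : (X → X → Q) → Q} (hAB : A ⊆ B)
    (hρσ : ∀ f ∈ A, ρ f = σ f) : kerChar A ρ = A ∩ kerChar B σ := by
  ext f
  constructor
  · rintro ⟨hf, h0⟩
    exact ⟨hf, hAB hf, hρσ f hf ▸ h0⟩
  · rintro ⟨hf, -, h0⟩
    exact ⟨hf, (hρσ f hf).symm ▸ h0⟩

end Kernel

def indicatorCompl (J : Set (X → X → Q)) (f : X → X → Q) : Q :=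
  if f ∈ J then ⊥ else Qd.one

namespace IsPrimeKStarIdeal

variable {Qd} {A J : Set (X → X → Q)}

theorem qid_not_mem (hJ : Qd.IsPrimeKStarIdeal A J) : Qd.qid ∉ J := fun h =>
  hJ.proper <| hJ.ideal.subset.antisymm fun f hf => Qd.qcomp_qid f ▸ hJ.ideal.absorb f hf _ h

theorem qdag_mem_iff (hJ : Qd.IsPrimeKStarIdeal A J) {f : X → X → Q} :
    Qd.qdag f ∈ J ↔ f ∈ J :=
  ⟨fun h => Qd.qdag_qdag f ▸ hJ.dag_mem _ h, hJ.dag_mem f⟩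

theorem sup_mem_iff (hJ : Qd.IsPrimeKStarIdeal A J) {f g : X → X → Q} (hf : f ∈ A)
    (hg : g ∈ A) : f ⊔ g ∈ J ↔ f ∈ J ∧ g ∈ J := by
  refine ⟨fun h => ⟨hJ.kideal _ h f hf ?_, hJ.kideal _ h g hg ?_⟩,
    fun h => hJ.ideal.sup_mem f h.1 g h.2⟩
  · rwa [sup_eq_left.mpr le_sup_left]
  · rwa [sup_eq_left.mpr le_sup_right]

theorem qcomp_mem_iff (hA : Qd.IsSubalg A) (hJ : Qd.IsPrimeKStarIdeal A J)
    {f g : X → X → Q} (hf : f ∈ A) (hg : g ∈ A) :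
    Qd.qcomp f g ∈ J ↔ f ∈ J ∨ g ∈ J := by
  refine ⟨hJ.prime f hf g hg, ?_⟩
  rintro (h | h)
  · exact hA.comp_comm g hg f hf ▸ hJ.ideal.absorb g hg f h
  · exact hJ.ideal.absorb f hf g h

theorem isChar_indicatorCompl (hA : Qd.IsSubalg A) (hJ : Qd.IsPrimeKStarIdeal A J) :
    Qd.IsChar A (Qd.indicatorCompl J) where
  map_zero := if_pos hJ.ideal.zero_mem
  map_id := if_neg hJ.qid_not_mem
  map_sup f hf g hg := by
    by_cases h1 : f ∈ J <;> by_cases h2 : g ∈ J <;>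
      simp [indicatorCompl, h1, h2, hJ.sup_mem_iff hf hg]
  map_comp f hf g hg := by
    by_cases h1 : f ∈ J <;> by_cases h2 : g ∈ J <;>
      simp [indicatorCompl, h1, h2, hJ.qcomp_mem_iff hA hf hg, Qd.mul_bot, Qd.bot_mul,
        Qd.one_mul]
  map_dag f _ := by
    by_cases h : f ∈ J <;> simp [indicatorCompl, h, hJ.qdag_mem_iff, Qd.inv_bot, Qd.inv_one]

end IsPrimeKStarIdeal

theorem indicatorCompl_eq_of_eq_inter {A J K : Set (X → X → Q)} (hJK : J = A ∩ K)
    {f : X → X → Q} (hf : f ∈ A) : Qd.indicatorCompl J f = Qd.indicatorCompl K f := by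
  simp [indicatorCompl, hJK, hf]

/-- There exists a global section of the Gelfand spectrum over `X`
iff there exists a global section of the prime spectrum over `X`. -/
theorem gelfand_global_section_iff_prime_global_section
    (Qd : CommInvQuantale Q) (hZDF : Qd.ZDF) (hNT : Qd.NontrivialQ)
    (X : Type v) :
    (∃ ρ : Set (X → X → Q) → (X → X → Q) → Q, Qd.IsGelfandGlobalSection ρ) ↔
    (∃ χ : Set (X → X → Q) → Set (X → X → Q), Qd.IsPrimeGlobalSection χ) := by
  constructor
  · rintro ⟨ρ, hchar, hres⟩
    exact ⟨fun A => kerChar A (ρ A),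
      fun A hA => (hchar A hA).isPrimeKStarIdeal_kerChar hZDF hNT hA.1,
      fun A B hA hB hAB => kerChar_eq_inter_kerChar hAB (hres A B hA hB hAB)⟩
  · rintro ⟨χ, hprime, hres⟩
    exact ⟨fun A => Qd.indicatorCompl (χ A),
      fun A hA => (hprime A hA).isChar_indicatorCompl hA.1,
      fun A B hA hB hAB _ hf => Qd.indicatorCompl_eq_of_eq_inter (hres A B hA hB hAB) hf⟩

end CommInvQuantale
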